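/- arXiv:1707.09634 — 6 statements merged into one kernel-verified Lean document; each statement's English description precedes it below -/
import Mathlib

section
/- If f ∈ L²(ℝ) with ‖f‖₂ = 1 and the orthonormal eigenfunctions ψ_k of the time-frequency localization operator H_{Ω,φ} have eigenvalues α₁ ≥ α₂ ≥ ⋯ in (0,1], and f is (ε,φ)-concentrated on Ω (i.e., Σ_k α_k |⟨f,ψ_k⟩|² ≥ 1−ε), then for any γ with α_N ≥ γ ≥ α_{N+1}, the projection P_{V_N}f onto the span of ψ₁,…,ψ_N satisfies ‖P_{V_N}f‖₂² ≥ 1 − ε/(1−γ). -/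
open scoped ComplexInnerProductSpace

lemma aux_norm_sum {H : Type*} [NormedAddCommGroup H] [InnerProductSpace ℂ H]
    {ι : Type*} {v : ι → H} (hv : Orthonormal ℂ v) (l : ι → ℂ) (s : Finset ι) :
    ‖∑ i ∈ s, l i • v i‖ ^ 2 = ∑ i ∈ s, ‖l i‖ ^ 2 := by
  classical
  have h : ⟪∑ i ∈ s, l i • v i, ∑ i ∈ s, l i • v i⟫ = (∑ i ∈ s, (‖l i‖ : ℂ) ^ 2) := by
    simp only [inner_sum, sum_inner, inner_smul_left, inner_smul_right, Finset.mul_sum]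
    rw [Finset.sum_comm]
    refine Finset.sum_congr rfl fun i hi => ?_
    rw [Finset.sum_eq_single i]
    · rw [orthonormal_iff_ite.mp hv, if_pos rfl, mul_one, mul_comm, RCLike.conj_mul]
      norm_cast
    · intro j hj hne
      rw [orthonormal_iff_ite.mp hv, if_neg (Ne.symm hne), mul_zero, mul_zero]
    · intro h; exact absurd hi h
  have := @inner_self_eq_norm_sq ℂ _ _ _ _ (∑ i ∈ s, l i • v i)
  rw [← this, h, map_sum]
  refine Finset.sum_congr rfl fun i _ => ?_
  norm_cast

set_option maxHeartbeats 1000000 in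
/-- If `f ∈ L²` has norm one and is `(ε,φ)`-concentrated on `Ω`
(expressed via the eigenvalues `α k` and orthonormal eigenfunctions `ψ k`
of the time-frequency localization operator, i.e. `∑ α_k |⟨f,ψ_k⟩|² ≥ 1 - ε`),
then the projection onto the span of the top `N` eigenfunctions satisfies
`‖P_{V_N} f‖² ≥ 1 - ε/(1-γ)` whenever `α_N ≥ γ ≥ α_{N+1}`. -/
theorem stmt0
    {H : Type*} [NormedAddCommGroup H] [InnerProductSpace ℂ H]
    (ψ : ℕ → H) (hψ : Orthonormal ℂ ψ)
    (α : ℕ → ℝ) (hmono : Antitone α) (hα : ∀ k, 0 < α k ∧ α k ≤ 1)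
    (f : H) (hf : ‖f‖ = 1)
    (ε γ : ℝ) (hε : 0 ≤ ε) (hγ0 : 0 ≤ γ) (hγ1 : γ < 1)
    (N : ℕ) (hγle : ∀ k < N, γ ≤ α k) (hαN : α N ≤ γ)
    (hconc : 1 - ε ≤ ∑' k, α k * ‖⟪ψ k, f⟫‖ ^ 2) :
    1 - ε / (1 - γ) ≤ ‖∑ k ∈ Finset.range N, ⟪ψ k, f⟫ • ψ k‖ ^ 2 := by
  set c : ℕ → ℝ := fun k => ‖⟪ψ k, f⟫‖ ^ 2 with hc
  have hcnn : ∀ k, 0 ≤ c k := fun k => by positivity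
  have hsum : Summable c := hψ.inner_products_summable f
  have hbessel : ∑' k, c k ≤ 1 := by
    have h := hψ.tsum_inner_products_le f
    rw [hf, one_pow] at h
    exact h
  have hαc_le : ∀ k, α k * c k ≤ c k := fun k =>
    mul_le_of_le_one_left (hcnn k) (hα k).2
  have hαc_nn : ∀ k, 0 ≤ α k * c k := fun k => mul_nonneg (hα k).1.le (hcnn k)
  have hαc_sum : Summable fun k => α k * c k :=
    Summable.of_nonneg_of_le hαc_nn hαc_le hsum
  have htail_sum : Summable fun k => c (k + N) := (summable_nat_add_iff N).2 hsum
  have hαtail_sum : Summable fun k => α (k + N) * c (k + N) :=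
    (summable_nat_add_iff N).2 hαc_sum
  set S := ∑ k ∈ Finset.range N, c k with hS
  set T := ∑' k, c (k + N) with hT
  have h2 : S + T = ∑' k, c k := Summable.sum_add_tsum_nat_add N hsum
  have h1 : ∑' k, α k * c k
      = ∑ k ∈ Finset.range N, α k * c k + ∑' k, α (k + N) * c (k + N) :=
    (Summable.sum_add_tsum_nat_add N hαc_sum).symm
  have hhead : ∑ k ∈ Finset.range N, α k * c k ≤ S :=
    Finset.sum_le_sum fun k _ => hαc_le k
  have htailb : ∑' k, α (k + N) * c (k + N) ≤ γ * T := by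
    rw [hT, ← tsum_mul_left]
    refine Summable.tsum_le_tsum (fun k => ?_) hαtail_sum (htail_sum.mul_left γ)
    exact mul_le_mul_of_nonneg_right (le_trans (hmono (Nat.le_add_left N k)) hαN)
      (hcnn _)
  have hTnn : 0 ≤ T := tsum_nonneg fun k => hcnn _
  have hTle : T ≤ 1 - S := by linarith [h2, hbessel]
  have key : 1 - ε ≤ S + γ * (1 - S) := by
    have := hconc
    rw [h1] at this
    nlinarith [mul_le_mul_of_nonneg_left hTle hγ0]
  have h1γ : 0 < 1 - γ := by linarith
  have hdm : ε / (1 - γ) * (1 - γ) = ε := div_mul_cancel₀ ε h1γ.ne'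
  have hfinal : 1 - ε / (1 - γ) ≤ S := by nlinarith [key]
  rw [aux_norm_sum hψ]
  exact hfinal
end

section
/- Under the same hypotheses, ‖f − P_{V_N}f‖₂² ≤ (ε/(1−γ))‖f‖₂². -/
/-!
Write `c_k = |⟪ψ_k, f⟫|²`. Pointwise `α_k ≤ γ + (1 - γ)·[k < N]`, so the concentration hypothesis
gives `(1 - ε)‖f‖² ≤ γ ∑ c_k + (1 - γ) ∑_{k<N} c_k ≤ γ‖f‖² + (1 - γ) ∑_{k<N} c_k` by Bessel.
Since `‖f - P_{V_N} f‖² = ‖f‖² - ∑_{k<N} c_k`, this is `(1 - γ)‖f - P_{V_N} f‖² ≤ ε‖f‖²`.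
-/

open scoped InnerProductSpace ComplexInnerProductSpace

theorem Orthonormal.norm_sub_sum_inner_smul_sq {𝕜 E ι : Type*} [RCLike 𝕜]
    [NormedAddCommGroup E] [InnerProductSpace 𝕜 E] {v : ι → E} (hv : Orthonormal 𝕜 v)
    (x : E) (s : Finset ι) :
    ‖x - ∑ i ∈ s, ⟪v i, x⟫_𝕜 • v i‖ ^ 2 = ‖x‖ ^ 2 - ∑ i ∈ s, ‖⟪v i, x⟫_𝕜‖ ^ 2 := by
  set p := ∑ i ∈ s, ⟪v i, x⟫_𝕜 • v i
  have hp : ⟪p, p⟫_𝕜 = ∑ i ∈ s, (‖⟪v i, x⟫_𝕜‖ ^ 2 : ℝ) := by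
    simp only [p, hv.inner_sum, RCLike.conj_mul]
    push_cast
    rfl
  have hx : ⟪x, p⟫_𝕜 = ⟪p, p⟫_𝕜 := by
    simp only [p, hv.inner_sum, inner_sum, inner_smul_right, ← inner_conj_symm x (v _), mul_comm]
  have horth : ⟪x - p, p⟫_𝕜 = 0 := by rw [inner_sub_left, hx, sub_self]
  have hpyth := norm_add_sq_eq_norm_sq_add_norm_sq_of_inner_eq_zero (x - p) p horth
  rw [sub_add_cancel] at hpyth
  have hp_norm : ‖p‖ ^ 2 = ∑ i ∈ s, ‖⟪v i, x⟫_𝕜‖ ^ 2 := by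
    rw [inner_self_eq_norm_sq_to_K] at hp
    exact_mod_cast hp
  nlinarith [hp_norm]

theorem tsum_mul_le_of_le_one_of_le {ι : Type*} {a c : ι → ℝ} {s : Finset ι} {γ : ℝ}
    (hc : Summable c) (hc0 : ∀ i, 0 ≤ c i) (ha0 : ∀ i, 0 ≤ a i) (ha1 : ∀ i, a i ≤ 1)
    (haγ : ∀ i ∉ s, a i ≤ γ) :
    ∑' i, a i * c i ≤ γ * ∑' i, c i + (1 - γ) * ∑ i ∈ s, c i := by
  classical
  have hac : Summable fun i => a i * c i :=
    hc.of_nonneg_of_le (fun i => mul_nonneg (ha0 i) (hc0 i))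
      (fun i => mul_le_of_le_one_left (hc0 i) (ha1 i))
  have hs : HasSum (fun i => if i ∈ s then c i else 0) (∑ i ∈ s, c i) := by
    simpa [Finset.sum_ite_mem] using hasSum_sum_of_ne_finset_zero (s := s) fun i hi => if_neg hi
  refine hasSum_le (fun i => ?_) hac.hasSum ((hc.hasSum.mul_left γ).add (hs.mul_left (1 - γ)))
  split_ifs with hi
  · nlinarith [ha1 i, hc0 i]
  · nlinarith [haγ i hi, hc0 i]

theorem stmt1_general
    {H : Type*} [NormedAddCommGroup H] [InnerProductSpace ℂ H]
    (ψ : ℕ → H) (hψ : Orthonormal ℂ ψ)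
    (α : ℕ → ℝ) (hmono : Antitone α) (hα : ∀ k, 0 < α k ∧ α k ≤ 1)
    (f : H)
    (ε γ : ℝ) (hγ0 : 0 ≤ γ) (hγ1 : γ < 1)
    (N : ℕ) (hαN : α N ≤ γ)
    (hconc : (1 - ε) * ‖f‖ ^ 2 ≤ ∑' k, α k * ‖⟪ψ k, f⟫‖ ^ 2) :
    ‖f - ∑ k ∈ Finset.range N, ⟪ψ k, f⟫ • ψ k‖ ^ 2 ≤ ε / (1 - γ) * ‖f‖ ^ 2 := by
  have hweighted := hconc.trans <| tsum_mul_le_of_le_one_of_le (s := Finset.range N)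
    (hψ.inner_products_summable f) (fun _ => by positivity) (fun k => (hα k).1.le)
    (fun k => (hα k).2) fun k hk => (hmono (not_lt.1 (Finset.mem_range.not.1 hk))).trans hαN
  have hbessel := mul_le_mul_of_nonneg_left (hψ.tsum_inner_products_le f) hγ0
  rw [hψ.norm_sub_sum_inner_smul_sq, div_mul_eq_mul_div, le_div_iff₀ (sub_pos.2 hγ1)]
  linarith

/-- Under the concentration hypothesis `∑ α_k |⟨f,ψ_k⟩|² ≥ (1-ε)‖f‖²`,
the projection `P_{V_N}f` onto the span of the top `N` eigenfunctions satisfies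
`‖f - P_{V_N}f‖² ≤ (ε/(1-γ)) ‖f‖²` whenever `α_N ≥ γ ≥ α_{N+1}`. -/
theorem stmt1
    {H : Type*} [NormedAddCommGroup H] [InnerProductSpace ℂ H]
    (ψ : ℕ → H) (hψ : Orthonormal ℂ ψ)
    (α : ℕ → ℝ) (hmono : Antitone α) (hα : ∀ k, 0 < α k ∧ α k ≤ 1)
    (f : H)
    (ε γ : ℝ) (hε : 0 ≤ ε) (hγ0 : 0 ≤ γ) (hγ1 : γ < 1)
    (N : ℕ) (hγle : ∀ k < N, γ ≤ α k) (hαN : α N ≤ γ)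
    (hconc : (1 - ε) * ‖f‖ ^ 2 ≤ ∑' k, α k * ‖⟪ψ k, f⟫‖ ^ 2) :
    ‖f - ∑ k ∈ Finset.range N, ⟪ψ k, f⟫ • ψ k‖ ^ 2 ≤ ε / (1 - γ) * ‖f‖ ^ 2 :=
  stmt1_general ψ hψ α hmono hα f ε γ hγ0 hγ1 N hαN hconc
end

section
/- Under the same hypotheses, the quadratic form of H_{Ω,φ} at P_{V_N}f satisfies ⟨H_{Ω,φ}P_{V_N}f, P_{V_N}f⟩ = Σ_{k=1}^N α_k|⟨f,ψ_k⟩|² ≥ γ(1 − ε/(1−γ))‖f‖₂². -/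
/- On `V_N` the operator acts diagonally, so its quadratic form at `P_{V_N} f` is the partial sum
`A = ∑_{k<N} α_k |⟨f,ψ_k⟩|²`. Writing `S = ‖P_{V_N} f‖²`, the eigenvalues beyond `N` are at most `γ`,
so by Bessel the concentration hypothesis gives `(1 - ε)‖f‖² ≤ A + γ(‖f‖² - S) ≤ S + γ(‖f‖² - S)`,
i.e. `S ≥ (1 - ε/(1-γ))‖f‖²`; the eigenvalues below `N` are at least `γ`, so `A ≥ γ S`. -/

open Finset
open scoped ComplexInnerProductSpace

theorem Orthonormal.inner_sum_smul_map_sum_smul {𝕜 E ι : Type*} [RCLike 𝕜]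
    [NormedAddCommGroup E] [InnerProductSpace 𝕜 E] {v : ι → E} (hv : Orthonormal 𝕜 v)
    {T : E →L[𝕜] E} {α : ι → ℝ} (hT : ∀ i, T (v i) = (α i : 𝕜) • v i) (c : ι → 𝕜)
    (s : Finset ι) :
    inner 𝕜 (∑ i ∈ s, c i • v i) (T (∑ i ∈ s, c i • v i))
      = ((∑ i ∈ s, α i * ‖c i‖ ^ 2 : ℝ) : 𝕜) := by
  simp only [map_sum, map_smul, hT, smul_smul, hv.inner_sum]
  push_cast
  refine sum_congr rfl fun i _ => ?_
  rw [← mul_assoc, RCLike.conj_mul, mul_comm]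

theorem tsum_mul_le_sum_range_add_mul_tsum_tail {a c : ℕ → ℝ} {γ : ℝ} {N : ℕ}
    (hac : Summable fun k => a k * c k) (hc : Summable c) (hc0 : ∀ k, 0 ≤ c k)
    (htail : ∀ k, N ≤ k → a k ≤ γ) :
    ∑' k, a k * c k ≤ ∑ k ∈ range N, a k * c k + γ * ∑' k, c (k + N) := by
  rw [← hac.sum_add_tsum_nat_add N, ← tsum_mul_left]
  refine add_le_add le_rfl <| (hac.comp_injective (add_left_injective N)).tsum_le_tsum
    (fun k => ?_) ((hc.comp_injective (add_left_injective N)).mul_left γ)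
  exact mul_le_mul_of_nonneg_right (htail _ (Nat.le_add_left N k)) (hc0 _)

theorem Orthonormal.tsum_inner_products_tail_le {𝕜 E : Type*} [RCLike 𝕜]
    [NormedAddCommGroup E] [InnerProductSpace 𝕜 E] {v : ℕ → E} (hv : Orthonormal 𝕜 v) (x : E)
    (N : ℕ) :
    ∑' k, ‖inner 𝕜 (v (k + N)) x‖ ^ 2 ≤ ‖x‖ ^ 2 - ∑ k ∈ range N, ‖inner 𝕜 (v k) x‖ ^ 2 := by
  have hsplit := (hv.inner_products_summable x).sum_add_tsum_nat_add N
  linarith [hv.tsum_inner_products_le x]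

theorem mul_one_sub_div_mul_le_of_le_add_mul_sub {A S F ε γ : ℝ} (hγ0 : 0 ≤ γ) (hγ1 : γ < 1)
    (hAS : A ≤ S) (hγS : γ * S ≤ A) (h : (1 - ε) * F ≤ A + γ * (F - S)) :
    γ * (1 - ε / (1 - γ)) * F ≤ A := by
  have hS : (1 - ε / (1 - γ)) * F ≤ S := by
    have h1γ : 0 < 1 - γ := by linarith
    refine le_of_mul_le_mul_right ?_ h1γ
    have hexpand : (1 - ε / (1 - γ)) * F * (1 - γ) = (1 - ε) * F - γ * F := by
      field_simp
      ring
    nlinarith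
  calc γ * (1 - ε / (1 - γ)) * F = γ * ((1 - ε / (1 - γ)) * F) := by ring
    _ ≤ γ * S := mul_le_mul_of_nonneg_left hS hγ0
    _ ≤ A := hγS

theorem stmt2_general
    {H : Type*} [NormedAddCommGroup H] [InnerProductSpace ℂ H]
    (ψ : ℕ → H) (hψ : Orthonormal ℂ ψ)
    (α : ℕ → ℝ) (hmono : Antitone α) (hα : ∀ k, 0 < α k ∧ α k ≤ 1)
    (T : H →L[ℂ] H)
    (heig : ∀ k, T (ψ k) = (α k : ℂ) • ψ k)
    (f : H)
    (ε γ : ℝ) (hγ0 : 0 ≤ γ) (hγ1 : γ < 1)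
    (N : ℕ) (hγle : ∀ k < N, γ ≤ α k) (hαN : α N ≤ γ)
    (hconc : (1 - ε) * ‖f‖ ^ 2 ≤ ∑' k, α k * ‖⟪ψ k, f⟫‖ ^ 2) :
    ⟪∑ k ∈ Finset.range N, ⟪ψ k, f⟫ • ψ k,
        T (∑ k ∈ Finset.range N, ⟪ψ k, f⟫ • ψ k)⟫
      = ((∑ k ∈ Finset.range N, α k * ‖⟪ψ k, f⟫‖ ^ 2 : ℝ) : ℂ) ∧
    γ * (1 - ε / (1 - γ)) * ‖f‖ ^ 2
      ≤ ∑ k ∈ Finset.range N, α k * ‖⟪ψ k, f⟫‖ ^ 2 := by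
  refine ⟨hψ.inner_sum_smul_map_sum_smul heig _ _, ?_⟩
  have hc := hψ.inner_products_summable f
  have hαc : Summable fun k => α k * ‖⟪ψ k, f⟫‖ ^ 2 :=
    hc.of_nonneg_of_le (fun k => mul_nonneg (hα k).1.le (by positivity))
      fun k => mul_le_of_le_one_left (by positivity) (hα k).2
  have hsplit := tsum_mul_le_sum_range_add_mul_tsum_tail hαc hc (fun k => by positivity)
    fun k hk => (hmono hk).trans hαN
  have hbessel := mul_le_mul_of_nonneg_left (hψ.tsum_inner_products_tail_le f N) hγ0
  refine mul_one_sub_div_mul_le_of_le_add_mul_sub hγ0 hγ1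
    (sum_le_sum fun k _ => mul_le_of_le_one_left (by positivity) (hα k).2) ?_ (by linarith)
  rw [mul_sum]
  exact sum_le_sum fun k hk =>
    mul_le_mul_of_nonneg_right (hγle k (mem_range.mp hk)) (by positivity)

/-- Under the same hypotheses, the quadratic form of the localization operator `T`
at `P_{V_N}f` equals `∑_{k<N} α_k |⟨f,ψ_k⟩|²` and is bounded below by
`γ (1 - ε/(1-γ)) ‖f‖²`. -/
theorem stmt2
    {H : Type*} [NormedAddCommGroup H] [InnerProductSpace ℂ H] [CompleteSpace H]
    (ψ : ℕ → H) (hψ : Orthonormal ℂ ψ)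
    (α : ℕ → ℝ) (hmono : Antitone α) (hα : ∀ k, 0 < α k ∧ α k ≤ 1)
    (T : H →L[ℂ] H) (hsa : IsSelfAdjoint T)
    (heig : ∀ k, T (ψ k) = (α k : ℂ) • ψ k)
    (f : H)
    (ε γ : ℝ) (hε : 0 ≤ ε) (hγ0 : 0 ≤ γ) (hγ1 : γ < 1)
    (N : ℕ) (hγle : ∀ k < N, γ ≤ α k) (hαN : α N ≤ γ)
    (hconc : (1 - ε) * ‖f‖ ^ 2 ≤ ∑' k, α k * ‖⟪ψ k, f⟫‖ ^ 2) :
    ⟪∑ k ∈ Finset.range N, ⟪ψ k, f⟫ • ψ k,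
        T (∑ k ∈ Finset.range N, ⟪ψ k, f⟫ • ψ k)⟫
      = ((∑ k ∈ Finset.range N, α k * ‖⟪ψ k, f⟫‖ ^ 2 : ℝ) : ℂ) ∧
    γ * (1 - ε / (1 - γ)) * ‖f‖ ^ 2
      ≤ ∑ k ∈ Finset.range N, α k * ‖⟪ψ k, f⟫‖ ^ 2 :=
  stmt2_general ψ hψ α hmono hα T heig f ε γ hγ0 hγ1 N hγle hαN hconc
end

section
/- Assume the Bessel bound Σ_j |V_φ g(λ_j)|² ≤ B‖g‖₂² for all g ∈ L²(ℝ), and that (1/r)Σ_{j=1}^r |V_φ p(λ_j)|² ≥ (⟨H_{Ω,φ}p,p⟩ − ν‖p‖₂²)/|Ω| for all p ∈ V_N, with α_N ≥ γ ≥ α_{N+1}, γ ∈ (0,1). Then for every f that is (ε,φ)-concentrated in Ω, Σ_{j=1}^r |V_φ f(λ_j)|² ≥ A‖f‖₂² with A = (r/|Ω|)(γ − γε/(1−γ) − ν) − 2B√(ε/(1−γ)). -/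
/-!
Write `p` for the expansion of `f` along `ψ₀, …, ψ_{N-1}` and `h = f - p`. The quadratic form
`⟪g, T g⟫ = ∑ α_k |⟪ψ_k, g⟫|²` splits over `p` and `h`, and `α_k ≤ γ` on the coefficients of `h`,
so concentration forces `(1 - γ)‖h‖² ≤ ε‖f‖²`. Since `α_k ≥ γ` on the coefficients of `p`, the
sampling inequality bounds `∑ |⟪u_j, p⟫|²` from below, and the Bessel bound for `u` shows that
adding `h` costs at most `2B‖p‖‖h‖ ≤ 2B √(ε/(1-γ)) ‖f‖²`.
-/

open MeasureTheory
open scoped ComplexInnerProductSpace InnerProductSpace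

section PartialExpansion

variable {𝕜 E ι : Type*} [RCLike 𝕜] [NormedAddCommGroup E] [InnerProductSpace 𝕜 E] {v : ι → E}

theorem Orthonormal.inner_sum_inner_smul [DecidableEq ι] (hv : Orthonormal 𝕜 v) (s : Finset ι)
    (x : E) (i : ι) :
    ⟪v i, ∑ j ∈ s, ⟪v j, x⟫_𝕜 • v j⟫_𝕜 = if i ∈ s then ⟪v i, x⟫_𝕜 else 0 := by
  simp only [inner_sum, inner_smul_right, orthonormal_iff_ite.mp hv, mul_ite, mul_one, mul_zero,
    Finset.sum_ite_eq]

theorem Orthonormal.inner_sub_sum_inner_smul [DecidableEq ι] (hv : Orthonormal 𝕜 v)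
    (s : Finset ι) (x : E) (i : ι) :
    ⟪v i, x - ∑ j ∈ s, ⟪v j, x⟫_𝕜 • v j⟫_𝕜 = if i ∈ s then 0 else ⟪v i, x⟫_𝕜 := by
  rw [inner_sub_right, hv.inner_sum_inner_smul]
  split_ifs <;> simp

theorem Orthonormal.mem_of_inner_sum_inner_smul_ne_zero (hv : Orthonormal 𝕜 v) {s : Finset ι}
    {x : E} {i : ι} (h : ⟪v i, ∑ j ∈ s, ⟪v j, x⟫_𝕜 • v j⟫_𝕜 ≠ 0) : i ∈ s := by
  classical
  by_contra hi
  rw [hv.inner_sum_inner_smul, if_neg hi] at h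
  exact h rfl

theorem Orthonormal.notMem_of_inner_sub_sum_inner_smul_ne_zero (hv : Orthonormal 𝕜 v)
    {s : Finset ι} {x : E} {i : ι} (h : ⟪v i, x - ∑ j ∈ s, ⟪v j, x⟫_𝕜 • v j⟫_𝕜 ≠ 0) : i ∉ s := by
  classical
  intro hi
  rw [hv.inner_sub_sum_inner_smul, if_pos hi] at h
  exact h rfl

theorem Orthonormal.norm_sq_sum_inner_smul (hv : Orthonormal 𝕜 v) (s : Finset ι) (x : E) :
    ‖∑ j ∈ s, ⟪v j, x⟫_𝕜 • v j‖ ^ 2 = ∑ j ∈ s, ‖⟪v j, x⟫_𝕜‖ ^ 2 := by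
  simpa using hv.orthogonalFamily.norm_sum (fun j => ⟪v j, x⟫_𝕜) s

theorem Orthonormal.tsum_inner_products_sum_inner_smul (hv : Orthonormal 𝕜 v) (s : Finset ι)
    (x : E) :
    ∑' i, ‖⟪v i, ∑ j ∈ s, ⟪v j, x⟫_𝕜 • v j⟫_𝕜‖ ^ 2 = ‖∑ j ∈ s, ⟪v j, x⟫_𝕜 • v j‖ ^ 2 := by
  classical
  rw [hv.norm_sq_sum_inner_smul, tsum_eq_sum (s := s) fun i hi => by
    rw [hv.inner_sum_inner_smul, if_neg hi, norm_zero, sq, mul_zero]]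
  exact Finset.sum_congr rfl fun i hi => by rw [hv.inner_sum_inner_smul, if_pos hi]

theorem Orthonormal.norm_sq_eq_norm_sq_sum_inner_smul_add (hv : Orthonormal 𝕜 v) (s : Finset ι)
    (x : E) :
    ‖x‖ ^ 2 = ‖∑ j ∈ s, ⟪v j, x⟫_𝕜 • v j‖ ^ 2 + ‖x - ∑ j ∈ s, ⟪v j, x⟫_𝕜 • v j‖ ^ 2 := by
  classical
  have horth : ⟪∑ j ∈ s, ⟪v j, x⟫_𝕜 • v j, x - ∑ j ∈ s, ⟪v j, x⟫_𝕜 • v j⟫_𝕜 = 0 := by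
    simp only [sum_inner, inner_smul_left, hv.inner_sub_sum_inner_smul]
    exact Finset.sum_eq_zero fun i hi => by rw [if_pos hi, mul_zero]
  conv_lhs => rw [← add_sub_cancel (∑ j ∈ s, ⟪v j, x⟫_𝕜 • v j) x]
  rw [norm_add_sq (𝕜 := 𝕜), horth, map_zero, mul_zero, add_zero]

end PartialExpansion

theorem Finset.sum_norm_sq_sub_le_sum_norm_add_sq {ι F : Type*} [SeminormedAddCommGroup F]
    (s : Finset ι) (a b : ι → F) :
    ∑ j ∈ s, ‖a j‖ ^ 2 - 2 * (√(∑ j ∈ s, ‖a j‖ ^ 2) * √(∑ j ∈ s, ‖b j‖ ^ 2))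
      ≤ ∑ j ∈ s, ‖a j + b j‖ ^ 2 := by
  have hterm : ∀ j, ‖a j‖ ^ 2 - 2 * (‖a j‖ * ‖b j‖) ≤ ‖a j + b j‖ ^ 2 := fun j => by
    have h := abs_norm_sub_norm_le (a j) (-b j)
    rw [norm_neg, sub_neg_eq_add] at h
    nlinarith [sq_le_sq.mpr (h.trans (le_abs_self _)), norm_nonneg (b j)]
  calc ∑ j ∈ s, ‖a j‖ ^ 2 - 2 * (√(∑ j ∈ s, ‖a j‖ ^ 2) * √(∑ j ∈ s, ‖b j‖ ^ 2))
      ≤ ∑ j ∈ s, ‖a j‖ ^ 2 - 2 * ∑ j ∈ s, ‖a j‖ * ‖b j‖ := by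
        gcongr; exact Real.sum_mul_le_sqrt_mul_sqrt s _ _
    _ = ∑ j ∈ s, (‖a j‖ ^ 2 - 2 * (‖a j‖ * ‖b j‖)) := by
        rw [Finset.sum_sub_distrib, Finset.mul_sum]
    _ ≤ ∑ j ∈ s, ‖a j + b j‖ ^ 2 := Finset.sum_le_sum fun j _ => hterm j

theorem sum_norm_inner_sq_sub_le_sum_norm_inner_add_sq {𝕜 E ι : Type*} [RCLike 𝕜]
    [NormedAddCommGroup E] [InnerProductSpace 𝕜 E] (s : Finset ι) (u : ι → E) {B : ℝ} (hB : 0 ≤ B)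
    (hBessel : ∀ g, ∑ j ∈ s, ‖⟪u j, g⟫_𝕜‖ ^ 2 ≤ B * ‖g‖ ^ 2) (x y : E) :
    ∑ j ∈ s, ‖⟪u j, x⟫_𝕜‖ ^ 2 - 2 * B * (‖x‖ * ‖y‖) ≤ ∑ j ∈ s, ‖⟪u j, x + y⟫_𝕜‖ ^ 2 := by
  have hsqrt : ∀ g, √(∑ j ∈ s, ‖⟪u j, g⟫_𝕜‖ ^ 2) ≤ √B * ‖g‖ := fun g => by
    rw [← Real.sqrt_sq (norm_nonneg g), ← Real.sqrt_mul hB]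
    exact Real.sqrt_le_sqrt (hBessel g)
  calc ∑ j ∈ s, ‖⟪u j, x⟫_𝕜‖ ^ 2 - 2 * B * (‖x‖ * ‖y‖)
      = ∑ j ∈ s, ‖⟪u j, x⟫_𝕜‖ ^ 2 - 2 * ((√B * ‖x‖) * (√B * ‖y‖)) := by
        linear_combination 2 * ‖x‖ * ‖y‖ * Real.mul_self_sqrt hB
    _ ≤ ∑ j ∈ s, ‖⟪u j, x⟫_𝕜‖ ^ 2
          - 2 * (√(∑ j ∈ s, ‖⟪u j, x⟫_𝕜‖ ^ 2) * √(∑ j ∈ s, ‖⟪u j, y⟫_𝕜‖ ^ 2)) := by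
        gcongr <;> exact hsqrt _
    _ ≤ ∑ j ∈ s, ‖⟪u j, x + y⟫_𝕜‖ ^ 2 := by
        simpa only [inner_add_right] using Finset.sum_norm_sq_sub_le_sum_norm_add_sq s
          (fun j => ⟪u j, x⟫_𝕜) (fun j => ⟪u j, y⟫_𝕜)

section DiagonalQuadraticForm

variable {𝕜 E ι : Type*} [RCLike 𝕜] [NormedAddCommGroup E] [InnerProductSpace 𝕜 E] {v : ι → E}
  {α : ι → ℝ} {T : E →L[𝕜] E}

variable (𝕜) in
def HasDiagonalQuadraticForm (v : ι → E) (α : ι → ℝ) (T : E →L[𝕜] E) : Prop :=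
  ∀ x, HasSum (fun i => α i * ‖⟪v i, x⟫_𝕜‖ ^ 2) (RCLike.re ⟪x, T x⟫_𝕜)

theorem Orthonormal.hasDiagonalQuadraticForm [CompleteSpace E] (hv : Orthonormal 𝕜 v)
    {C : ℝ} (hα : ∀ i, |α i| ≤ C) (hT : ∀ x, T x = ∑' i, ((α i : 𝕜) * ⟪v i, x⟫_𝕜) • v i) :
    HasDiagonalQuadraticForm 𝕜 v α T := by
  intro x
  have hcoeff : Summable fun i => ‖(α i : 𝕜) * ⟪v i, x⟫_𝕜‖ ^ 2 := by
    refine .of_nonneg_of_le (fun i => by positivity) (fun i => ?_)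
      ((hv.inner_products_summable x).mul_left (C ^ 2))
    rw [norm_mul, RCLike.norm_ofReal, mul_pow]
    gcongr
    exact hα i
  have hTx : HasSum (fun i => ((α i : 𝕜) * ⟪v i, x⟫_𝕜) • v i) (T x) := by
    rw [hT x]
    simpa using ((hv.orthogonalFamily.summable_iff_norm_sq_summable _).mpr hcoeff).hasSum
  have hxTx := RCLike.hasSum_re 𝕜 (hTx.mapL (innerSL 𝕜 x))
  simp only [innerSL_apply_apply, inner_smul_right] at hxTx
  convert hxTx using 2 with i
  rw [← inner_conj_symm x (v i), mul_assoc, RCLike.mul_conj, ← RCLike.ofReal_pow,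
    ← RCLike.ofReal_mul, RCLike.ofReal_re]

theorem HasDiagonalQuadraticForm.re_inner_apply_add (hQ : HasDiagonalQuadraticForm 𝕜 v α T)
    {x y : E} (hxy : ∀ i, ⟪v i, x⟫_𝕜 = 0 ∨ ⟪v i, y⟫_𝕜 = 0) :
    RCLike.re ⟪x + y, T (x + y)⟫_𝕜 = RCLike.re ⟪x, T x⟫_𝕜 + RCLike.re ⟪y, T y⟫_𝕜 := by
  refine (hQ (x + y)).unique ?_
  convert (hQ x).add (hQ y) using 1
  funext i
  rcases hxy i with h | h <;> simp [inner_add_right, h]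

theorem Orthonormal.re_inner_apply_le_mul_tsum (hv : Orthonormal 𝕜 v)
    (hQ : HasDiagonalQuadraticForm 𝕜 v α T)
    {x : E} {c : ℝ} (hc : ∀ i, ⟪v i, x⟫_𝕜 ≠ 0 → α i ≤ c) :
    RCLike.re ⟪x, T x⟫_𝕜 ≤ c * ∑' i, ‖⟪v i, x⟫_𝕜‖ ^ 2 := by
  refine hasSum_le (fun i => ?_) (hQ x) ((hv.inner_products_summable x).hasSum.mul_left c)
  by_cases h : ⟪v i, x⟫_𝕜 = 0
  · simp [h]
  · exact mul_le_mul_of_nonneg_right (hc i h) (sq_nonneg _)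

theorem Orthonormal.mul_tsum_le_re_inner_apply (hv : Orthonormal 𝕜 v)
    (hQ : HasDiagonalQuadraticForm 𝕜 v α T)
    {x : E} {c : ℝ} (hc : ∀ i, ⟪v i, x⟫_𝕜 ≠ 0 → c ≤ α i) :
    c * ∑' i, ‖⟪v i, x⟫_𝕜‖ ^ 2 ≤ RCLike.re ⟪x, T x⟫_𝕜 := by
  refine hasSum_le (fun i => ?_) ((hv.inner_products_summable x).hasSum.mul_left c) (hQ x)
  by_cases h : ⟪v i, x⟫_𝕜 = 0
  · simp [h]
  · exact mul_le_mul_of_nonneg_right (hc i h) (sq_nonneg _)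

theorem Orthonormal.mul_norm_sq_sum_inner_smul_le_re_inner_apply (hv : Orthonormal 𝕜 v)
    (hQ : HasDiagonalQuadraticForm 𝕜 v α T)
    (s : Finset ι) {c : ℝ} (hc : ∀ i ∈ s, c ≤ α i) (x : E) :
    c * ‖∑ j ∈ s, ⟪v j, x⟫_𝕜 • v j‖ ^ 2
      ≤ RCLike.re ⟪∑ j ∈ s, ⟪v j, x⟫_𝕜 • v j, T (∑ j ∈ s, ⟪v j, x⟫_𝕜 • v j)⟫_𝕜 := by
  rw [← hv.tsum_inner_products_sum_inner_smul]
  exact hv.mul_tsum_le_re_inner_apply hQ fun i hi =>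
    hc i (hv.mem_of_inner_sum_inner_smul_ne_zero hi)

theorem Orthonormal.norm_sq_sub_sum_inner_smul_le (hv : Orthonormal 𝕜 v)
    (hQ : HasDiagonalQuadraticForm 𝕜 v α T)
    (s : Finset ι) {γ ε : ℝ} (hγ0 : 0 ≤ γ) (hγ1 : γ < 1) (hs : ∀ i ∈ s, α i ≤ 1)
    (hsγ : ∀ i ∉ s, α i ≤ γ) {x : E} (hx : (1 - ε) * ‖x‖ ^ 2 ≤ RCLike.re ⟪x, T x⟫_𝕜) :
    ‖x - ∑ j ∈ s, ⟪v j, x⟫_𝕜 • v j‖ ^ 2 ≤ ε / (1 - γ) * ‖x‖ ^ 2 := by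
  classical
  set p := ∑ j ∈ s, ⟪v j, x⟫_𝕜 • v j
  have hsplit :
      RCLike.re ⟪x, T x⟫_𝕜 = RCLike.re ⟪p, T p⟫_𝕜 + RCLike.re ⟪x - p, T (x - p)⟫_𝕜 := by
    conv_lhs => rw [← add_sub_cancel p x]
    refine hQ.re_inner_apply_add fun i => ?_
    rw [hv.inner_sum_inner_smul, hv.inner_sub_sum_inner_smul]
    by_cases hi : i ∈ s <;> simp [hi]
  have hp : RCLike.re ⟪p, T p⟫_𝕜 ≤ ‖p‖ ^ 2 := by
    refine (hv.re_inner_apply_le_mul_tsum hQ fun i hi =>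
      hs i (hv.mem_of_inner_sum_inner_smul_ne_zero hi)).trans_eq ?_
    rw [one_mul, hv.tsum_inner_products_sum_inner_smul]
  have hh : RCLike.re ⟪x - p, T (x - p)⟫_𝕜 ≤ γ * ‖x - p‖ ^ 2 := by
    refine (hv.re_inner_apply_le_mul_tsum hQ fun i hi =>
      hsγ i (hv.notMem_of_inner_sub_sum_inner_smul_ne_zero hi)).trans ?_
    exact mul_le_mul_of_nonneg_left (hv.tsum_inner_products_le _) hγ0
  have hpyth := hv.norm_sq_eq_norm_sq_sum_inner_smul_add s x
  rw [div_mul_eq_mul_div, le_div_iff₀ (sub_pos.2 hγ1)]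
  nlinarith

theorem Orthonormal.mul_norm_sq_sub_le_re_inner_apply_sum_inner_smul (hv : Orthonormal 𝕜 v)
    (hQ : HasDiagonalQuadraticForm 𝕜 v α T)
    (s : Finset ι) {γ ε : ℝ} (hγ0 : 0 ≤ γ) (hγ1 : γ < 1)
    (hs : ∀ i ∈ s, γ ≤ α i ∧ α i ≤ 1)
    (hsγ : ∀ i ∉ s, α i ≤ γ) {x : E} (hx : (1 - ε) * ‖x‖ ^ 2 ≤ RCLike.re ⟪x, T x⟫_𝕜) :
    (γ - γ * ε / (1 - γ)) * ‖x‖ ^ 2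
      ≤ RCLike.re ⟪∑ j ∈ s, ⟪v j, x⟫_𝕜 • v j, T (∑ j ∈ s, ⟪v j, x⟫_𝕜 • v j)⟫_𝕜 := by
  have hp := hv.mul_norm_sq_sum_inner_smul_le_re_inner_apply hQ s (fun i hi => (hs i hi).1) x
  have hh := hv.norm_sq_sub_sum_inner_smul_le hQ s hγ0 hγ1 (fun i hi => (hs i hi).2) hsγ hx
  have hpyth := hv.norm_sq_eq_norm_sq_sum_inner_smul_add s x
  rw [mul_div_assoc]
  nlinarith [mul_le_mul_of_nonneg_left hh hγ0]

end DiagonalQuadraticForm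

theorem stmt10_general
    {H : Type*} [NormedAddCommGroup H] [InnerProductSpace ℂ H] [CompleteSpace H]
    (Ω : Set (ℝ × ℝ))
    (ψ : ℕ → H) (hψ : Orthonormal ℂ ψ)
    (α : ℕ → ℝ) (hmono : Antitone α) (hα : ∀ k, 0 < α k ∧ α k ≤ 1)
    (T : H →L[ℂ] H)
    (hspec : ∀ f : H, T f = ∑' k, ((α k : ℂ) * ⟪ψ k, f⟫) • ψ k)
    (N : ℕ) (γ : ℝ) (hγ0 : 0 < γ) (hγ1 : γ < 1)
    (hγle : ∀ k < N, γ ≤ α k) (hαN : α N ≤ γ)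
    (r : ℕ) (hr : 0 < r)
    (u : Fin r → H)     -- `u j = π(λ_j)φ`
    (B : ℝ) (hB : 0 ≤ B)
    (hBessel : ∀ g : H, ∑ j, ‖⟪u j, g⟫‖ ^ 2 ≤ B * ‖g‖ ^ 2)
    (ν : ℝ) (hν : 0 ≤ ν)
    (hsamp : ∀ p ∈ Submodule.span ℂ (ψ '' Set.Iio N),
      ((⟪p, T p⟫).re - ν * ‖p‖ ^ 2) / (volume Ω).toReal
        ≤ (1 / r) * ∑ j, ‖⟪u j, p⟫‖ ^ 2)
    (ε : ℝ)
    (f : H) (hconc : (1 - ε) * ‖f‖ ^ 2 ≤ (⟪f, T f⟫).re) :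
    (r / (volume Ω).toReal * (γ - γ * ε / (1 - γ) - ν)
        - 2 * B * Real.sqrt (ε / (1 - γ))) * ‖f‖ ^ 2
      ≤ ∑ j, ‖⟪u j, f⟫‖ ^ 2 := by
  set p := ∑ k ∈ Finset.range N, ⟪ψ k, f⟫ • ψ k
  have hQ := hψ.hasDiagonalQuadraticForm (C := 1)
    (fun k => abs_le.2 ⟨by linarith [(hα k).1], (hα k).2⟩) hspec
  have hαs : ∀ k ∉ Finset.range N, α k ≤ γ := fun k hk => (hmono (by simpa using hk)).trans hαN
  have hfp : ‖f - p‖ ^ 2 ≤ ε / (1 - γ) * ‖f‖ ^ 2 :=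
    hψ.norm_sq_sub_sum_inner_smul_le hQ _ hγ0.le hγ1 (fun k _ => (hα k).2) hαs hconc
  have hpT : (γ - γ * ε / (1 - γ)) * ‖f‖ ^ 2 ≤ (⟪p, T p⟫).re :=
    hψ.mul_norm_sq_sub_le_re_inner_apply_sum_inner_smul hQ _ hγ0.le hγ1
      (fun k hk => ⟨hγle k (by simpa using hk), (hα k).2⟩) hαs hconc
  have hpf : ‖p‖ ^ 2 ≤ ‖f‖ ^ 2 := by
    linarith [hψ.norm_sq_eq_norm_sq_sum_inner_smul_add (Finset.range N) f, sq_nonneg ‖f - p‖]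
  have hpspan : p ∈ Submodule.span ℂ (ψ '' Set.Iio N) := Submodule.sum_mem _ fun k hk =>
    Submodule.smul_mem _ _ (Submodule.subset_span ⟨k, by simpa using hk, rfl⟩)
  have hsampled : r / (volume Ω).toReal * ((γ - γ * ε / (1 - γ) - ν) * ‖f‖ ^ 2)
      ≤ ∑ j, ‖⟪u j, p⟫‖ ^ 2 :=
    calc r / (volume Ω).toReal * ((γ - γ * ε / (1 - γ) - ν) * ‖f‖ ^ 2)
        ≤ r / (volume Ω).toReal * ((⟪p, T p⟫).re - ν * ‖p‖ ^ 2) := by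
          gcongr
          linarith [mul_le_mul_of_nonneg_left hpf hν]
      _ = r * (((⟪p, T p⟫).re - ν * ‖p‖ ^ 2) / (volume Ω).toReal) := by ring
      _ ≤ r * (1 / r * ∑ j, ‖⟪u j, p⟫‖ ^ 2) := by gcongr; exact hsamp p hpspan
      _ = ∑ j, ‖⟪u j, p⟫‖ ^ 2 := by field_simp
  have hh : ‖f - p‖ ≤ √(ε / (1 - γ)) * ‖f‖ := by
    rw [← Real.sqrt_sq (norm_nonneg f), ← Real.sqrt_mul' _ (sq_nonneg _)]
    exact Real.le_sqrt_of_sq_le hfp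
  have hp : ‖p‖ ≤ ‖f‖ := (pow_le_pow_iff_left₀ (norm_nonneg _) (norm_nonneg _) two_ne_zero).1 hpf
  have hperturb :=
    sum_norm_inner_sq_sub_le_sum_norm_inner_add_sq Finset.univ u hB hBessel p (f - p)
  rw [add_sub_cancel] at hperturb
  nlinarith [mul_le_mul_of_nonneg_left (mul_le_mul hp hh (norm_nonneg _) (norm_nonneg f))
    (by positivity : 0 ≤ 2 * B)]

/-- Under the Bessel bound `∑_j |V_φ g(λ_j)|² ≤ B‖g‖²` and the sampling
inequality `(1/r) ∑_j |V_φ p(λ_j)|² ≥ (⟨H_{Ω,φ}p,p⟩ - ν‖p‖²)/|Ω|` on `V_N`,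
every `(ε,φ)`-concentrated `f` satisfies `∑_j |V_φ f(λ_j)|² ≥ A‖f‖²` with
`A = (r/|Ω|)(γ - γε/(1-γ) - ν) - 2B√(ε/(1-γ))`. -/
theorem stmt10
    {H : Type*} [NormedAddCommGroup H] [InnerProductSpace ℂ H] [CompleteSpace H]
    (φ : H) (hφ : ‖φ‖ = 1)
    (Ω : Set (ℝ × ℝ)) (hΩc : IsCompact Ω) (hΩ : 0 < (volume Ω).toReal)
    (ψ : ℕ → H) (hψ : Orthonormal ℂ ψ)
    (α : ℕ → ℝ) (hmono : Antitone α) (hα : ∀ k, 0 < α k ∧ α k ≤ 1)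
    (T : H →L[ℂ] H) (hsa : IsSelfAdjoint T)
    (hspec : ∀ f : H, T f = ∑' k, ((α k : ℂ) * ⟪ψ k, f⟫) • ψ k)
    (N : ℕ) (γ : ℝ) (hγ0 : 0 < γ) (hγ1 : γ < 1)
    (hγle : ∀ k < N, γ ≤ α k) (hαN : α N ≤ γ)
    (r : ℕ) (hr : 0 < r)
    (u : Fin r → H) (hu : ∀ j, ‖u j‖ = 1)     -- `u j = π(λ_j)φ`
    (B : ℝ) (hB : 0 ≤ B)
    (hBessel : ∀ g : H, ∑ j, ‖⟪u j, g⟫‖ ^ 2 ≤ B * ‖g‖ ^ 2)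
    (ν : ℝ) (hν : 0 ≤ ν)
    (hsamp : ∀ p ∈ Submodule.span ℂ (ψ '' Set.Iio N),
      ((⟪p, T p⟫).re - ν * ‖p‖ ^ 2) / (volume Ω).toReal
        ≤ (1 / r) * ∑ j, ‖⟪u j, p⟫‖ ^ 2)
    (ε : ℝ) (hε : 0 ≤ ε)
    (f : H) (hconc : (1 - ε) * ‖f‖ ^ 2 ≤ (⟪f, T f⟫).re) :
    (r / (volume Ω).toReal * (γ - γ * ε / (1 - γ) - ν)
        - 2 * B * Real.sqrt (ε / (1 - γ))) * ‖f‖ ^ 2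
      ≤ ∑ j, ‖⟪u j, f⟫‖ ^ 2 :=
  stmt10_general Ω ψ hψ α hmono hα T hspec N γ hγ0 hγ1 hγle hαN r hr u B hB hBessel ν hν hsamp ε f
    hconc
end

section
/- The set of (ε,φ)-concentrated functions on Ω is not closed under subtraction: there exist f, g both (ε,φ)-concentrated on Ω (i.e., ⟨H_{Ω,φ}h,h⟩ ≥ (1−ε)‖h‖₂² for h = f,g) such that f − g is not (ε,φ)-concentrated on Ω. Concretely, if ψ_M is an eigenfunction with eigenvalue α_M > 1−ε and h = Σ_k c_kψ_k with 0 < c_M < (1−ε)/α_M, Σ|c_k|² = 1, Σα_k|c_k|² = 1−ηε for some 1 < η < 1/ε, then for δ with 0 < δ ≤ 2c_M(α_M−(1−ε))/(ε(η−1)), both ψ_M and f = ψ_M + δh are (ε,φ)-concentrated but f − ψ_M = δh is not. -/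
/-!
Expanding in the eigenbasis, `‖h‖² = ∑ |c_k|² = 1` and `⟪h, T h⟫ = ∑ α_k |c_k|² = 1 - ηε`,
so `δh` is not concentrated precisely because `η > 1`. For `f = ψ_M + δh` the cross terms
contribute `2δ c_M` to `‖f‖²` and `2δ c_M α_M` to `⟪f, T f⟫`, and the gain
`(α_M - (1 - ε))(1 + 2δ c_M)` over the threshold absorbs the loss `δ² ε (η - 1)` coming from `h`
once `δ` is as small as assumed.
-/

open scoped ComplexInnerProductSpace
open scoped InnerProductSpace ComplexConjugate

section OrthonormalExpansion

variable {𝕜 E ι : Type*} [RCLike 𝕜] [NormedAddCommGroup E] [InnerProductSpace 𝕜 E]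
  {v : ι → E} {a b : ι → 𝕜} {x y : E}

theorem Orthonormal.inner_left_eq_of_hasSum (hv : Orthonormal 𝕜 v)
    (hx : HasSum (fun i => a i • v i) x) (i : ι) : ⟪v i, x⟫_𝕜 = a i := by
  classical
  refine ((innerSL 𝕜 (v i)).hasSum hx).unique ?_
  convert hasSum_ite_eq i (a i) using 2 with j
  rcases eq_or_ne i j with rfl | hij
  · simp [hv.1 i]
  · simp [hv.2 hij, hij.symm]

theorem Orthonormal.hasSum_inner_of_hasSum (hv : Orthonormal 𝕜 v)
    (hx : HasSum (fun i => a i • v i) x) (hy : HasSum (fun i => b i • v i) y) :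
    HasSum (fun i => conj (a i) * b i) ⟪x, y⟫_𝕜 := by
  have h := (innerSL 𝕜 x).hasSum hy
  simp only [innerSL_apply_apply, inner_smul_right] at h
  convert h using 2 with i
  rw [← inner_conj_symm, hv.inner_left_eq_of_hasSum hx, mul_comm]

theorem Orthonormal.hasSum_norm_sq_of_hasSum (hv : Orthonormal 𝕜 v)
    (hx : HasSum (fun i => a i • v i) x) : HasSum (fun i => ‖a i‖ ^ 2) (‖x‖ ^ 2) := by
  have h := hv.hasSum_inner_of_hasSum hx hx
  simp only [RCLike.conj_mul, inner_self_eq_norm_sq_to_K] at h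
  exact_mod_cast h

theorem ContinuousLinearMap.hasSum_apply_of_apply_eq_smul {μ : ι → 𝕜} (T : E →L[𝕜] E)
    (hT : ∀ i, T (v i) = μ i • v i) (hx : HasSum (fun i => a i • v i) x) :
    HasSum (fun i => (μ i * a i) • v i) (T x) := by
  simpa [hT, smul_smul, mul_comm] using T.hasSum hx

theorem Orthonormal.hasSum_re_inner_apply_of_hasSum (hv : Orthonormal 𝕜 v) {μ : ι → ℝ}
    {T : E →L[𝕜] E} (hT : ∀ i, T (v i) = (μ i : 𝕜) • v i)
    (hx : HasSum (fun i => a i • v i) x) :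
    HasSum (fun i => μ i * ‖a i‖ ^ 2) (RCLike.re ⟪x, T x⟫_𝕜) := by
  have h := RCLike.hasSum_re 𝕜 <|
    hv.hasSum_inner_of_hasSum hx (T.hasSum_apply_of_apply_eq_smul hT hx)
  convert h using 2 with i
  rw [mul_left_comm, RCLike.conj_mul]
  norm_cast

end OrthonormalExpansion

section QuadraticForm

variable {𝕜 E : Type*} [RCLike 𝕜] [NormedAddCommGroup E] [InnerProductSpace 𝕜 E]
  [Module ℝ E] [IsScalarTower ℝ 𝕜 E]

theorem re_inner_add_real_smul_apply (T : E →L[𝕜] E) (u w : E) (r : ℝ) :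
    RCLike.re ⟪u + r • w, T (u + r • w)⟫_𝕜 = RCLike.re ⟪u, T u⟫_𝕜
      + r * (RCLike.re ⟪u, T w⟫_𝕜 + RCLike.re ⟪w, T u⟫_𝕜) + r ^ 2 * RCLike.re ⟪w, T w⟫_𝕜 := by
  simp only [RCLike.real_smul_eq_coe_smul (K := 𝕜), map_add, map_smul, inner_add_left,
    inner_add_right, inner_smul_left, inner_smul_right, RCLike.conj_ofReal, map_add,
    RCLike.re_ofReal_mul]
  ring

theorem norm_add_real_smul_sq (u w : E) (r : ℝ) :
    ‖u + r • w‖ ^ 2 = ‖u‖ ^ 2 + r * (2 * RCLike.re ⟪u, w⟫_𝕜) + r ^ 2 * ‖w‖ ^ 2 := by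
  have h := re_inner_add_real_smul_apply (ContinuousLinearMap.id 𝕜 E) u w r
  simp only [ContinuousLinearMap.id_apply, inner_self_eq_norm_sq, inner_re_symm (𝕜 := 𝕜) w u] at h
  linarith

theorem re_inner_real_smul_apply (T : E →L[𝕜] E) (w : E) (r : ℝ) :
    RCLike.re ⟪r • w, T (r • w)⟫_𝕜 = r ^ 2 * RCLike.re ⟪w, T w⟫_𝕜 := by
  simpa using re_inner_add_real_smul_apply T 0 w r

end QuadraticForm

theorem stmt14_general
    {H : Type*} [NormedAddCommGroup H] [InnerProductSpace ℂ H]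
    (ψ : ℕ → H) (hψ : Orthonormal ℂ ψ)
    (α : ℕ → ℝ)
    (T : H →L[ℂ] H)
    (heig : ∀ k, T (ψ k) = (α k : ℂ) • ψ k)
    (ε : ℝ) (hε0 : 0 < ε)
    (M : ℕ) (hαM : 1 - ε < α M)
    (c : ℕ → ℂ) (t : ℝ) (hcM : c M = (t : ℂ))
    (h : H) (hh : HasSum (fun k => c k • ψ k) h)
    (hnorm : ∑' k, ‖c k‖ ^ 2 = 1)
    (η : ℝ) (hη1 : 1 < η)
    (hηconc : ∑' k, α k * ‖c k‖ ^ 2 = 1 - η * ε)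
    (δ : ℝ) (hδ0 : 0 < δ) (hδ : δ ≤ 2 * t * (α M - (1 - ε)) / (ε * (η - 1))) :
    ((1 - ε) * ‖ψ M‖ ^ 2 ≤ (⟪ψ M, T (ψ M)⟫).re) ∧
    ((1 - ε) * ‖ψ M + δ • h‖ ^ 2 ≤ (⟪ψ M + δ • h, T (ψ M + δ • h)⟫).re) ∧
    ¬ ((1 - ε) * ‖(ψ M + δ • h) - ψ M‖ ^ 2
        ≤ (⟪(ψ M + δ • h) - ψ M, T ((ψ M + δ • h) - ψ M)⟫).re) := by
  have hnorm_h : ‖h‖ ^ 2 = 1 := (hψ.hasSum_norm_sq_of_hasSum hh).tsum_eq.symm.trans hnorm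
  have hTh : (⟪h, T h⟫).re = 1 - η * ε :=
    (hψ.hasSum_re_inner_apply_of_hasSum heig hh).tsum_eq.symm.trans hηconc
  have hψh : ⟪ψ M, h⟫ = t := by rw [hψ.inner_left_eq_of_hasSum hh, hcM]
  have hψTψ : (⟪ψ M, T (ψ M)⟫).re = α M := by simp [heig, hψ.1 M]
  have hψTh : (⟪ψ M, T h⟫).re = α M * t := by
    simp [hψ.inner_left_eq_of_hasSum (T.hasSum_apply_of_apply_eq_smul heig hh), hcM]
  have hhTψ : (⟪h, T (ψ M)⟫).re = α M * t := by
    rw [heig, inner_smul_right, ← inner_conj_symm, hψh]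
    simp
  have hεη : 0 < ε * (η - 1) := mul_pos hε0 (sub_pos.mpr hη1)
  refine ⟨by simpa [hψ.1 M, hψTψ] using hαM.le, ?_, ?_⟩
  · have hnorm_f := norm_add_real_smul_sq (𝕜 := ℂ) (ψ M) h δ
    have hTf := re_inner_add_real_smul_apply T (ψ M) h δ
    simp only [RCLike.re_to_complex, hψh, Complex.ofReal_re, hψ.1 M, hnorm_h] at hnorm_f hTf
    rw [hnorm_f, hTf, hψTψ, hψTh, hhTψ, hTh]
    have hδε : δ * (ε * (η - 1)) ≤ 2 * t * (α M - (1 - ε)) := (le_div_iff₀ hεη).mp hδ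
    nlinarith [mul_le_mul_of_nonneg_left hδε hδ0.le]
  · have hTδh := re_inner_real_smul_apply T h δ
    simp only [RCLike.re_to_complex] at hTδh
    rw [add_sub_cancel_left, norm_smul, hTδh, hTh, mul_pow, hnorm_h, Real.norm_eq_abs, sq_abs]
    nlinarith [pow_pos hδ0 2]

/-- The set of `(ε,φ)`-concentrated functions is not closed under subtraction:
if `ψ_M` is an eigenfunction with eigenvalue `α_M > 1-ε` and
`h = ∑_k c_k ψ_k` with `0 < c_M < (1-ε)/α_M`, `∑|c_k|² = 1`,
`∑ α_k |c_k|² = 1 - ηε` for some `1 < η < 1/ε`, then for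
`0 < δ ≤ 2c_M(α_M - (1-ε))/(ε(η-1))`, both `ψ_M` and `f = ψ_M + δh` are
`(ε,φ)`-concentrated but `f - ψ_M = δh` is not. -/
theorem stmt14
    {H : Type*} [NormedAddCommGroup H] [InnerProductSpace ℂ H] [CompleteSpace H]
    (ψ : ℕ → H) (hψ : Orthonormal ℂ ψ)
    (α : ℕ → ℝ) (hα : ∀ k, 0 < α k ∧ α k ≤ 1)
    (T : H →L[ℂ] H) (hsa : IsSelfAdjoint T)
    (heig : ∀ k, T (ψ k) = (α k : ℂ) • ψ k)
    (ε : ℝ) (hε0 : 0 < ε) (hε1 : ε < 1)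
    (M : ℕ) (hαM : 1 - ε < α M)
    (c : ℕ → ℂ) (t : ℝ) (hcM : c M = (t : ℂ))
    (ht0 : 0 < t) (ht1 : t < (1 - ε) / α M)
    (h : H) (hh : HasSum (fun k => c k • ψ k) h)
    (hnorm : ∑' k, ‖c k‖ ^ 2 = 1)
    (η : ℝ) (hη1 : 1 < η) (hη2 : η < 1 / ε)
    (hηconc : ∑' k, α k * ‖c k‖ ^ 2 = 1 - η * ε)
    (δ : ℝ) (hδ0 : 0 < δ) (hδ : δ ≤ 2 * t * (α M - (1 - ε)) / (ε * (η - 1))) :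
    ((1 - ε) * ‖ψ M‖ ^ 2 ≤ (⟪ψ M, T (ψ M)⟫).re) ∧
    ((1 - ε) * ‖ψ M + δ • h‖ ^ 2 ≤ (⟪ψ M + δ • h, T (ψ M + δ • h)⟫).re) ∧
    ¬ ((1 - ε) * ‖(ψ M + δ • h) - ψ M‖ ^ 2
        ≤ (⟪(ψ M + δ • h) - ψ M, T ((ψ M + δ • h) - ψ M)⟫).re) :=
  stmt14_general ψ hψ α T heig ε hε0 M hαM c t hcM h hh hnorm η hη1 hηconc δ hδ0 hδ
end

section
/- Abstract version: let H be a self-adjoint operator with 0 ≤ H ≤ I on a Hilbert space, 0 < ε < 1, and suppose ψ is a unit eigenvector with Hψ = αψ, α > 1−ε, and h is a unit vector with ⟨Hh,h⟩ = 1−ηε for some η ∈ (1,1/ε) and Re⟨Hψ,h⟩ = α·c for some c ∈ (0,(1−ε)/α). Then for 0 < δ ≤ 2c(α−(1−ε))/(ε(η−1)), the vector f = ψ + δh satisfies ⟨Hf,f⟩ ≥ (1−ε)‖f‖₂² while ⟨H(δh),δh⟩ < (1−ε)‖δh‖₂². -/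
/-!
Since `T` is symmetric, `f = ψ + δ • h` has `⟨f, T f⟩ = α + 2δαc + δ²(1 - ηε)` and
`‖f‖² = 1 + 2δc + δ²`, so `⟨f, T f⟩ - (1 - ε)‖f‖² = (α - (1 - ε))(1 + 2δc) - δ²ε(η - 1)`.
The bound on `δ` says exactly that `δ²ε(η - 1) ≤ 2δc(α - (1 - ε))`, which leaves
`α - (1 - ε) > 0`. For `δ • h` alone only the term `-δ²ε(η - 1) < 0` survives.
-/

open scoped ComplexInnerProductSpace

section QuadraticForm

open RCLike

variable {𝕜 E : Type*} [RCLike 𝕜] [NormedAddCommGroup E] [InnerProductSpace 𝕜 E]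
  [Module ℝ E] [IsScalarTower ℝ 𝕜 E]

theorem norm_add_real_smul_sq_s15 (x y : E) (r : ℝ) :
    ‖x + r • y‖ ^ 2 = ‖x‖ ^ 2 + 2 * r * re (inner 𝕜 x y) + r ^ 2 * ‖y‖ ^ 2 := by
  rw [norm_add_sq (𝕜 := 𝕜), real_smul_eq_coe_smul (K := 𝕜), inner_smul_real_right, norm_smul,
    norm_algebraMap', Real.norm_eq_abs, mul_pow, sq_abs, smul_re]
  ring

theorem re_inner_real_smul_apply_real_smul (T : E →ₗ[𝕜] E) (x : E) (r : ℝ) :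
    re (inner 𝕜 (r • x) (T (r • x))) = r ^ 2 * re (inner 𝕜 x (T x)) := by
  rw [real_smul_eq_coe_smul (K := 𝕜), map_smul, inner_smul_real_left, inner_smul_real_right,
    smul_re, smul_re, ← mul_assoc, sq]

theorem LinearMap.IsSymmetric.re_inner_add_real_smul_apply {T : E →ₗ[𝕜] E} (hT : T.IsSymmetric)
    (x y : E) (r : ℝ) :
    re (inner 𝕜 (x + r • y) (T (x + r • y))) =
      re (inner 𝕜 x (T x)) + 2 * r * re (inner 𝕜 y (T x)) + r ^ 2 * re (inner 𝕜 y (T y)) := by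
  have hcross : re (inner 𝕜 x (T y)) = re (inner 𝕜 y (T x)) := by
    rw [← hT, ← inner_conj_symm, conj_re]
  rw [map_add, inner_add_left, inner_add_right, inner_add_right, map_add, map_add, map_add,
    re_inner_real_smul_apply_real_smul, real_smul_eq_coe_smul (K := 𝕜), map_smul,
    inner_smul_real_left, inner_smul_real_right, smul_re, smul_re, hcross]
  ring

end QuadraticForm

theorem concentration_of_perturbation_bound {ε α η c δ : ℝ} (hε : 0 < ε) (hα : 1 - ε < α)
    (hη : 1 < η) (hδ0 : 0 ≤ δ) (hδ : δ ≤ 2 * c * (α - (1 - ε)) / (ε * (η - 1))) :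
    (1 - ε) * (1 + 2 * δ * c + δ ^ 2) ≤ α + 2 * δ * (α * c) + δ ^ 2 * (1 - η * ε) := by
  have hδ' : δ * (ε * (η - 1)) ≤ 2 * c * (α - (1 - ε)) :=
    (le_div_iff₀ (mul_pos hε (sub_pos.mpr hη))).mp hδ
  nlinarith [mul_le_mul_of_nonneg_left hδ' hδ0]

theorem stmt15_general
    {H : Type*} [NormedAddCommGroup H] [InnerProductSpace ℂ H] [CompleteSpace H]
    (T : H →L[ℂ] H) (hsa : IsSelfAdjoint T)
    (ε : ℝ) (hε0 : 0 < ε)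
    (ψ h : H) (hψ : ‖ψ‖ = 1) (hh : ‖h‖ = 1)
    (α : ℝ) (heig : T ψ = (α : ℂ) • ψ) (hα : 1 - ε < α)
    (η : ℝ) (hη1 : 1 < η)
    (hQh : (⟪h, T h⟫).re = 1 - η * ε)
    (c : ℝ)
    (hinner : ⟪h, ψ⟫ = (c : ℂ))
    (hReTψh : (⟪h, T ψ⟫).re = α * c)
    (δ : ℝ) (hδ0 : 0 < δ) (hδ : δ ≤ 2 * c * (α - (1 - ε)) / (ε * (η - 1))) :
    ((1 - ε) * ‖ψ + δ • h‖ ^ 2 ≤ (⟪ψ + δ • h, T (ψ + δ • h)⟫).re) ∧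
    (⟪δ • h, T (δ • h)⟫).re < (1 - ε) * ‖δ • h‖ ^ 2 := by
  simp only [← RCLike.re_to_complex] at hQh hReTψh ⊢
  have hQψ : RCLike.re ⟪ψ, T ψ⟫ = α := by
    rw [heig, inner_smul_right, inner_self_eq_norm_sq_to_K, hψ]
    simp
  have hψh : RCLike.re ⟪ψ, h⟫ = c := by
    rw [← inner_conj_symm, hinner, Complex.conj_ofReal, RCLike.re_to_complex, Complex.ofReal_re]
  have hQf :
      RCLike.re ⟪ψ + δ • h, T (ψ + δ • h)⟫ = α + 2 * δ * (α * c) + δ ^ 2 * (1 - η * ε) := by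
    rw [← hReTψh, ← hQψ, ← hQh]
    exact hsa.isSymmetric.re_inner_add_real_smul_apply ψ h δ
  have hQδh : RCLike.re ⟪δ • h, T (δ • h)⟫ = δ ^ 2 * (1 - η * ε) := by
    rw [← hQh]
    exact re_inner_real_smul_apply_real_smul (T : H →ₗ[ℂ] H) h δ
  constructor
  · rw [norm_add_real_smul_sq_s15 (𝕜 := ℂ), hψ, hh, hψh, hQf]
    simpa using concentration_of_perturbation_bound hε0 hα hη1 hδ0.le hδ
  · rw [hQδh, norm_smul, hh, Real.norm_eq_abs, abs_of_pos hδ0, mul_one, mul_comm]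
    have hdefect : 1 - η * ε < 1 - ε := by linarith [lt_mul_of_one_lt_left hε0 hη1]
    exact mul_lt_mul_of_pos_right hdefect (pow_pos hδ0 2)

/-- Abstract version: let `T` be self-adjoint with `0 ≤ T ≤ I`, `0 < ε < 1`,
`ψ` a unit eigenvector with `Tψ = αψ`, `α > 1-ε`, and `h` a unit vector with
`⟨Th,h⟩ = 1-ηε`, `η ∈ (1,1/ε)`, `⟨ψ,h⟩ = c ∈ (0,(1-ε)/α)` real (so
`Re⟨Tψ,h⟩ = αc`). Then for `0 < δ ≤ 2c(α-(1-ε))/(ε(η-1))`, `f = ψ + δh`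
satisfies `⟨Tf,f⟩ ≥ (1-ε)‖f‖²` while `⟨T(δh),δh⟩ < (1-ε)‖δh‖²`. -/
theorem stmt15
    {H : Type*} [NormedAddCommGroup H] [InnerProductSpace ℂ H] [CompleteSpace H]
    (T : H →L[ℂ] H) (hsa : IsSelfAdjoint T)
    (hpos : ∀ v : H, 0 ≤ (⟪v, T v⟫).re) (hle : ∀ v : H, (⟪v, T v⟫).re ≤ ‖v‖ ^ 2)
    (ε : ℝ) (hε0 : 0 < ε) (hε1 : ε < 1)
    (ψ h : H) (hψ : ‖ψ‖ = 1) (hh : ‖h‖ = 1)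
    (α : ℝ) (heig : T ψ = (α : ℂ) • ψ) (hα : 1 - ε < α)
    (η : ℝ) (hη1 : 1 < η) (hη2 : η < 1 / ε)
    (hQh : (⟪h, T h⟫).re = 1 - η * ε)
    (c : ℝ) (hc0 : 0 < c) (hc1 : c < (1 - ε) / α)
    (hinner : ⟪h, ψ⟫ = (c : ℂ))
    (hReTψh : (⟪h, T ψ⟫).re = α * c)
    (δ : ℝ) (hδ0 : 0 < δ) (hδ : δ ≤ 2 * c * (α - (1 - ε)) / (ε * (η - 1))) :
    ((1 - ε) * ‖ψ + δ • h‖ ^ 2 ≤ (⟪ψ + δ • h, T (ψ + δ • h)⟫).re) ∧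
    (⟪δ • h, T (δ • h)⟫).re < (1 - ε) * ‖δ • h‖ ^ 2 :=
  stmt15_general T hsa ε hε0 ψ h hψ hh α heig hα η hη1 hQh c hinner hReTψh δ hδ0 hδ
end
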